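/- For every formula Φ of full intuitionistic propositional logic one can construct a monotonic automaton M_Φ and a state q of M_Φ such that ⊢ Φ (Φ is intuitionistically provable) if and only if the configuration ⟨q, ∅⟩ of M_Φ is accepting; more precisely, in M_Φ a configuration of the form ⟨φ, Γ⟩ (with φ a subformula of Φ used as a state and Γ a set of subformulas used as registers) is accepting if and only if Γ ⊢ M : φ for some long normal form M. -/

import Mathlib

set_option autoImplicit true

namespace IPCStmt8

inductive Formula : Type
  | var : ℕ → Formula
  | bot : Formula
  | imp : Formula → Formula → Formula
  | conj : Formula → Formula → Formula
  | disj : Formula → Formula → Formula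
  deriving DecidableEq

/-- Proof terms of IPC (Church style, de Bruijn indices).
`abort M φ` is the ⊥-eliminator `M[φ]`, `case M φ N₁ ψ N₂ ρ` is the
∨-eliminator `M[x:φ.N₁; y:ψ.N₂]` annotated with its result type ρ. -/
inductive Tm : Type
  | var : ℕ → Tm
  | abort : Tm → Formula → Tm
  | lam : Formula → Tm → Tm
  | app : Tm → Tm → Tm
  | pair : Tm → Tm → Tm
  | fst : Tm → Tm
  | snd : Tm → Tm
  | inl : Tm → Tm
  | inr : Tm → Tm
  | case : Tm → Formula → Tm → Formula → Tm → Formula → Tm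
  deriving DecidableEq

/-- Natural deduction for IPC as a type assignment system. -/
inductive Typing : List Formula → Tm → Formula → Prop
  | var {Γ n φ} : Γ[n]? = some φ → Typing Γ (.var n) φ
  | abort {Γ M φ} : Typing Γ M .bot → Typing Γ (.abort M φ) φ
  | lam {Γ φ ψ M} : Typing (φ :: Γ) M ψ → Typing Γ (.lam φ M) (.imp φ ψ)
  | app {Γ M N φ ψ} : Typing Γ M (.imp φ ψ) → Typing Γ N φ → Typing Γ (.app M N) ψ
  | pair {Γ M N φ ψ} : Typing Γ M φ → Typing Γ N ψ → Typing Γ (.pair M N) (.conj φ ψ)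
  | fst {Γ M φ ψ} : Typing Γ M (.conj φ ψ) → Typing Γ (.fst M) φ
  | snd {Γ M φ ψ} : Typing Γ M (.conj φ ψ) → Typing Γ (.snd M) ψ
  | inl {Γ M φ ψ} : Typing Γ M φ → Typing Γ (.inl M) (.disj φ ψ)
  | inr {Γ M φ ψ} : Typing Γ M ψ → Typing Γ (.inr M) (.disj φ ψ)
  | case {Γ M N₁ N₂ φ ψ ρ} : Typing Γ M (.disj φ ψ) → Typing (φ :: Γ) N₁ ρ →
      Typing (ψ :: Γ) N₂ ρ → Typing Γ (.case M φ N₁ ψ N₂ ρ) ρ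


def Formula.isAtom : Formula → Prop
  | .var _ => True
  | .bot => True
  | _ => False

def Formula.isDisj : Formula → Prop
  | .disj _ _ => True
  | _ => False

mutual
  /-- `Lnf M φ`: the term `M` is a long normal form of type `φ`. -/
  inductive Lnf : Tm → Formula → Prop
    | lam {φ ψ N} : Lnf N ψ → Lnf (.lam φ N) (.imp φ ψ)
    | pair {φ ψ N₁ N₂} : Lnf N₁ φ → Lnf N₂ ψ → Lnf (.pair N₁ N₂) (.conj φ ψ)
    | inl {φ ψ N} : Lnf N φ → Lnf (.inl N) (.disj φ ψ)
    | inr {φ ψ N} : Lnf N ψ → Lnf (.inr N) (.disj φ ψ)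
    | spine {M φ} : Spine M → φ.isAtom → Lnf M φ
    | caseE {M φ ψ ρ P Q} : Spine M → Lnf P ρ → Lnf Q ρ → (ρ.isAtom ∨ ρ.isDisj) →
        Lnf (.case M φ P ψ Q ρ) ρ
    | abortE {M ρ} : Spine M → (ρ.isAtom ∨ ρ.isDisj) → Lnf (.abort M ρ) ρ

  /-- `Spine M`: the term `M` has the shape `x E₁ … Eₙ` where every `Eᵢ` is a
  projection or a long normal form. -/
  inductive Spine : Tm → Prop
    | var {n} : Spine (.var n)
    | app {M N} {φ : Formula} : Spine M → Lnf N φ → Spine (.app M N)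
    | fst {M} : Spine M → Spine (.fst M)
    | snd {M} : Spine M → Spine (.snd M)
end

/-- Instructions of a monotonic automaton:
`test q S₁ S₂ p` is `q : S₁? S₂↑ jmp p` and `branch q p₁ p₂` is `q : jmp p₁ or p₂`. -/
inductive Instr (Q R : Type) : Type
  | test : Q → Finset R → Finset R → Q → Instr Q R
  | branch : Q → Q → Q → Instr Q R

/-- A monotonic automaton `⟨Q, R, f, I⟩` (the state and register sets are the
types `Q` and `R`, `final` is the final state, `instrs` the finite set of
instructions). -/
structure MonAut (Q R : Type) : Type where
  final : Q
  instrs : List (Instr Q R)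

/-- Acceptance of configurations `⟨q, S⟩`: the least predicate closed under the
final state, type-(1) transitions, and universal type-(2) branching. -/
inductive Accepting {Q R : Type} [DecidableEq R] (A : MonAut Q R) : Q → Finset R → Prop
  | final {S} : Accepting A A.final S
  | test {q S S₁ S₂ p} : Instr.test q S₁ S₂ p ∈ A.instrs → S₁ ⊆ S →
      Accepting A p (S ∪ S₂) → Accepting A q S
  | branch {q S p₁ p₂} : Instr.branch q p₁ p₂ ∈ A.instrs →
      Accepting A p₁ S → Accepting A p₂ S → Accepting A q S

/-- The finite set of subformulas of a formula. -/
def subf : Formula → Finset Formula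
  | .var p => {.var p}
  | .bot => {.bot}
  | .imp τ σ => insert (.imp τ σ) (subf τ ∪ subf σ)
  | .conj τ σ => insert (.conj τ σ) (subf τ ∪ subf σ)
  | .disj τ σ => insert (.disj τ σ) (subf τ ∪ subf σ)

lemma self_mem_subf (φ : Formula) : φ ∈ subf φ := by
  cases φ <;> simp [subf]

lemma subf_closed : ∀ {Φ φ : Formula}, φ ∈ subf Φ → ∀ {χ}, χ ∈ subf φ → χ ∈ subf Φ := by
  intro Φ
  induction Φ with
  | var p => intro φ h χ hχ; simp [subf] at h; subst h; exact hχ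
  | bot => intro φ h χ hχ; simp [subf] at h; subst h; exact hχ
  | imp a b iha ihb =>
      intro φ h χ hχ
      simp only [subf, Finset.mem_insert, Finset.mem_union] at h ⊢
      rcases h with h | h | h
      · subst h; simpa [subf] using hχ
      · exact Or.inr (Or.inl (iha h hχ))
      · exact Or.inr (Or.inr (ihb h hχ))
  | conj a b iha ihb =>
      intro φ h χ hχ
      simp only [subf, Finset.mem_insert, Finset.mem_union] at h ⊢
      rcases h with h | h | h
      · subst h; simpa [subf] using hχ
      · exact Or.inr (Or.inl (iha h hχ))
      · exact Or.inr (Or.inr (ihb h hχ))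
  | disj a b iha ihb =>
      intro φ h χ hχ
      simp only [subf, Finset.mem_insert, Finset.mem_union] at h ⊢
      rcases h with h | h | h
      · subst h; simpa [subf] using hχ
      · exact Or.inr (Or.inl (iha h hχ))
      · exact Or.inr (Or.inr (ihb h hχ))

lemma mem_imp_l {Φ a b : Formula} (h : Formula.imp a b ∈ subf Φ) : a ∈ subf Φ :=
  subf_closed h (by simp [subf, self_mem_subf])
lemma mem_imp_r {Φ a b : Formula} (h : Formula.imp a b ∈ subf Φ) : b ∈ subf Φ :=
  subf_closed h (by simp [subf, self_mem_subf])
lemma mem_conj_l {Φ a b : Formula} (h : Formula.conj a b ∈ subf Φ) : a ∈ subf Φ :=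
  subf_closed h (by simp [subf, self_mem_subf])
lemma mem_conj_r {Φ a b : Formula} (h : Formula.conj a b ∈ subf Φ) : b ∈ subf Φ :=
  subf_closed h (by simp [subf, self_mem_subf])
lemma mem_disj_l {Φ a b : Formula} (h : Formula.disj a b ∈ subf Φ) : a ∈ subf Φ :=
  subf_closed h (by simp [subf, self_mem_subf])
lemma mem_disj_r {Φ a b : Formula} (h : Formula.disj a b ∈ subf Φ) : b ∈ subf Φ :=
  subf_closed h (by simp [subf, self_mem_subf])


/-- Combined long-normal-form (`true`) / spine (`false`) derivability judgement. -/
inductive AJ : Bool → List Formula → Formula → Prop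
  | hyp {L φ} : φ ∈ L → AJ false L φ
  | app {L a b} : AJ false L (.imp a b) → AJ true L a → AJ false L b
  | fst {L a b} : AJ false L (.conj a b) → AJ false L a
  | snd {L a b} : AJ false L (.conj a b) → AJ false L b
  | lam {L a b} : AJ true (a :: L) b → AJ true L (.imp a b)
  | pair {L a b} : AJ true L a → AJ true L b → AJ true L (.conj a b)
  | inl {L a b} : AJ true L a → AJ true L (.disj a b)
  | inr {L a b} : AJ true L b → AJ true L (.disj a b)
  | ne {L φ} : AJ false L φ → φ.isAtom → AJ true L φ
  | case {L a b ρ} : AJ false L (.disj a b) → AJ true (a :: L) ρ → AJ true (b :: L) ρ →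
      (ρ.isAtom ∨ ρ.isDisj) → AJ true L ρ
  | abort {L ρ} : AJ false L .bot → (ρ.isAtom ∨ ρ.isDisj) → AJ true L ρ

def incl (L L' : List Formula) : Prop := ∀ χ, χ ∈ L → χ ∈ L'

lemma incl_refl {L : List Formula} : incl L L := fun _ h => h
lemma incl_trans {L₁ L₂ L₃ : List Formula} (h : incl L₁ L₂) (h' : incl L₂ L₃) : incl L₁ L₃ :=
  fun χ hχ => h' χ (h χ hχ)
lemma incl_cons {L : List Formula} {a : Formula} : incl L (a :: L) :=
  fun _ h => List.mem_cons_of_mem _ h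
lemma incl_cons₂ {L L' : List Formula} {a : Formula} (h : incl L L') : incl (a :: L) (a :: L') := by
  intro χ hχ
  rcases List.mem_cons.mp hχ with h' | h'
  · exact h' ▸ List.mem_cons_self
  · exact List.mem_cons_of_mem _ (h χ h')

lemma AJ.mono {b L L' φ} (h : AJ b L φ) (hi : incl L L') : AJ b L' φ := by
  induction h generalizing L' with
  | hyp h => exact .hyp (hi _ h)
  | app h1 h2 ih1 ih2 => exact .app (ih1 hi) (ih2 hi)
  | fst h ih => exact .fst (ih hi)
  | snd h ih => exact .snd (ih hi)
  | lam h ih => exact .lam (ih (incl_cons₂ hi))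
  | pair h1 h2 ih1 ih2 => exact .pair (ih1 hi) (ih2 hi)
  | inl h ih => exact .inl (ih hi)
  | inr h ih => exact .inr (ih hi)
  | ne h ha ih => exact .ne (ih hi) ha
  | case h h1 h2 hc ih ih1 ih2 =>
      exact .case (ih hi) (ih1 (incl_cons₂ hi)) (ih2 (incl_cons₂ hi)) hc
  | abort h hc ih => exact .abort (ih hi) hc

lemma AJ_sub_aux {Φ b L φ} (h : AJ b L φ) : b = false → (∀ γ ∈ L, γ ∈ subf Φ) → φ ∈ subf Φ := by
  induction h with
  | hyp h => intro _ hL; exact hL _ h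
  | app h1 h2 ih1 ih2 => intro _ hL; exact mem_imp_r (ih1 rfl hL)
  | fst h ih => intro _ hL; exact mem_conj_l (ih rfl hL)
  | snd h ih => intro _ hL; exact mem_conj_r (ih rfl hL)
  | lam h ih => intro hb; simp at hb
  | pair h1 h2 ih1 ih2 => intro hb; simp at hb
  | inl h ih => intro hb; simp at hb
  | inr h ih => intro hb; simp at hb
  | ne h ha ih => intro hb; simp at hb
  | case h h1 h2 hc ih ih1 ih2 => intro hb; simp at hb
  | abort h hc ih => intro hb; simp at hb

lemma AJ.memSub {Φ L φ} (h : AJ false L φ) (hL : ∀ γ ∈ L, γ ∈ subf Φ) : φ ∈ subf Φ :=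
  AJ_sub_aux h rfl hL

lemma mem_get? {l : List Formula} {a : Formula} (h : a ∈ l) : ∃ n : ℕ, l[n]? = some a := by
  obtain ⟨n, hn, h2⟩ := List.mem_iff_getElem.mp h
  exact ⟨n, by rw [List.getElem?_eq_getElem hn, h2]⟩

lemma AJ.toTerm {b L φ} (h : AJ b L φ) : ∃ M, Typing L M φ ∧ cond b (Lnf M φ) (Spine M) := by
  induction h with
  | hyp h =>
      obtain ⟨n, hn⟩ := mem_get? h
      exact ⟨.var n, .var hn, .var⟩
  | app h1 h2 ih1 ih2 =>
      obtain ⟨M, tM, sM⟩ := ih1; obtain ⟨N, tN, lN⟩ := ih2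
      exact ⟨.app M N, .app tM tN, .app sM lN⟩
  | fst h ih => obtain ⟨M, t, s⟩ := ih; exact ⟨.fst M, .fst t, .fst s⟩
  | snd h ih => obtain ⟨M, t, s⟩ := ih; exact ⟨.snd M, .snd t, .snd s⟩
  | lam h ih => obtain ⟨M, t, l⟩ := ih; exact ⟨.lam _ M, .lam t, .lam l⟩
  | pair h1 h2 ih1 ih2 =>
      obtain ⟨M, t1, l1⟩ := ih1; obtain ⟨N, t2, l2⟩ := ih2
      exact ⟨.pair M N, .pair t1 t2, .pair l1 l2⟩
  | inl h ih => obtain ⟨M, t, l⟩ := ih; exact ⟨.inl M, .inl t, .inl l⟩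
  | inr h ih => obtain ⟨M, t, l⟩ := ih; exact ⟨.inr M, .inr t, .inr l⟩
  | ne h ha ih => obtain ⟨M, t, s⟩ := ih; exact ⟨M, t, .spine s ha⟩
  | case h h1 h2 hc ih ih1 ih2 =>
      obtain ⟨M, t, s⟩ := ih; obtain ⟨P, t1, l1⟩ := ih1; obtain ⟨Q, t2, l2⟩ := ih2
      exact ⟨.case M _ P _ Q _, .case t t1 t2, .caseE s l1 l2 hc⟩
  | abort h hc ih =>
      obtain ⟨M, t, s⟩ := ih
      exact ⟨.abort M _, .abort t, .abortE s hc⟩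

/-- The cover monad for normalisation by evaluation. -/
inductive Cov (P : List Formula → Prop) : List Formula → Prop
  | ret {L} : P L → Cov P L
  | abs {L} : AJ false L .bot → Cov P L
  | split {L a b} : AJ false L (.disj a b) → Cov P (a :: L) → Cov P (b :: L) → Cov P L

lemma Cov.mono {P : List Formula → Prop}
    (hP : ∀ {Δ Δ'}, incl Δ Δ' → P Δ → P Δ') {L L'} (h : Cov P L) (hi : incl L L') :
    Cov P L' := by
  induction h generalizing L' with
  | ret h => exact .ret (hP hi h)
  | abs h => exact .abs (h.mono hi)
  | split h c1 c2 ih1 ih2 =>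
      exact .split (h.mono hi) (ih1 (incl_cons₂ hi)) (ih2 (incl_cons₂ hi))

lemma Cov.bind {P Q : List Formula → Prop} {L} (h : Cov P L)
    (f : ∀ Δ, incl L Δ → P Δ → Cov Q Δ) : Cov Q L := by
  induction h with
  | ret h => exact f _ incl_refl h
  | abs h => exact .abs h
  | split h c1 c2 ih1 ih2 =>
      exact .split h (ih1 fun Δ hi p => f Δ (incl_trans incl_cons hi) p)
        (ih2 fun Δ hi p => f Δ (incl_trans incl_cons hi) p)

lemma Cov.reify {ρ : Formula} {P : List Formula → Prop} {L}
    (hρ : ρ.isAtom ∨ ρ.isDisj) (h : Cov P L)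
    (f : ∀ Δ, incl L Δ → P Δ → AJ true Δ ρ) : AJ true L ρ := by
  induction h with
  | ret h => exact f _ incl_refl h
  | abs h => exact .abort h hρ
  | split h c1 c2 ih1 ih2 =>
      exact .case h (ih1 fun Δ hi p => f Δ (incl_trans incl_cons hi) p)
        (ih2 fun Δ hi p => f Δ (incl_trans incl_cons hi) p) hρ

/-- Kripke-style forcing over contexts. -/
def Sem : Formula → List Formula → Prop
  | .var p, L => AJ true L (.var p)
  | .bot, L => Cov (fun _ => False) L
  | .imp a b, L => ∀ L', incl L L' → Sem a L' → Sem b L'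
  | .conj a b, L => Sem a L ∧ Sem b L
  | .disj a b, L => Cov (fun Δ => Sem a Δ ∨ Sem b Δ) L

lemma Sem.mono : ∀ (φ : Formula) {L L'}, Sem φ L → incl L L' → Sem φ L' := by
  intro φ
  induction φ with
  | var p => exact fun h hi => AJ.mono h hi
  | bot => exact fun h hi => Cov.mono (fun _ h => h) h hi
  | imp a b iha ihb => exact fun h hi L'' hi2 sa => h L'' (incl_trans hi hi2) sa
  | conj a b iha ihb => exact fun h hi => ⟨iha h.1 hi, ihb h.2 hi⟩
  | disj a b iha ihb =>
      exact fun h hi => Cov.mono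
        (fun hj p => p.elim (fun x => Or.inl (iha x hj)) (fun x => Or.inr (ihb x hj))) h hi

lemma rr : ∀ (φ : Formula) (L : List Formula),
    (AJ false L φ → Sem φ L) ∧ (Sem φ L → AJ true L φ) := by
  intro φ
  induction φ with
  | var p => exact fun L => ⟨fun h => .ne h trivial, id⟩
  | bot =>
      exact fun L => ⟨fun h => .abs h, fun h => Cov.reify (Or.inl trivial) h
        (fun Δ _ p => p.elim)⟩
  | imp a b iha ihb =>
      refine fun L => ⟨fun h L' hi sa => (ihb L').1 (.app (h.mono hi) ((iha L').2 sa)), fun s => ?_⟩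
      exact .lam ((ihb (a :: L)).2 (s (a :: L) incl_cons
        ((iha (a :: L)).1 (.hyp (List.mem_cons_self)))))
  | conj a b iha ihb =>
      exact fun L => ⟨fun h => ⟨(iha L).1 (.fst h), (ihb L).1 (.snd h)⟩,
        fun s => .pair ((iha L).2 s.1) ((ihb L).2 s.2)⟩
  | disj a b iha ihb =>
      refine fun L => ⟨fun h => ?_, fun s => ?_⟩
      · exact .split h (.ret (Or.inl ((iha _).1 (.hyp (List.mem_cons_self)))))
          (.ret (Or.inr ((ihb _).1 (.hyp (List.mem_cons_self)))))
      · exact Cov.reify (Or.inr trivial) s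
          (fun Δ _ p => p.elim (fun x => .inl ((iha Δ).2 x)) (fun x => .inr ((ihb Δ).2 x)))

lemma Sem.paste : ∀ (ρ : Formula) {P : List Formula → Prop} {L},
    (∀ {Δ Δ'}, incl Δ Δ' → P Δ → P Δ') → Cov P L →
    (∀ Δ, incl L Δ → P Δ → Sem ρ Δ) → Sem ρ L := by
  intro ρ
  induction ρ with
  | var p => exact fun hP h f => Cov.reify (Or.inl trivial) h f
  | bot => exact fun hP h f => Cov.bind h f
  | disj a b iha ihb => exact fun hP h f => Cov.bind h f
  | imp a b iha ihb =>
      intro P L hP h f L' hi sa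
      exact ihb hP (Cov.mono hP h hi)
        (fun Δ hi2 p => f Δ (incl_trans hi hi2) p Δ incl_refl (Sem.mono a sa hi2))
  | conj a b iha ihb =>
      intro P L hP h f
      exact ⟨iha hP h (fun Δ hi p => (f Δ hi p).1), ihb hP h (fun Δ hi p => (f Δ hi p).2)⟩

lemma env_ext {Γ : List Formula} {Δ Δ' : List Formula} {a : Formula} (hi : incl Δ Δ')
    (env : ∀ (n : ℕ) χ, Γ[n]? = some χ → Sem χ Δ) (sa : Sem a Δ') :
    ∀ (n : ℕ) χ, (a :: Γ)[n]? = some χ → Sem χ Δ' := by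
  intro n χ hg
  cases n with
  | zero => cases hg; exact sa
  | succ n => exact Sem.mono χ (env n χ hg) hi

lemma Typing.sound {Γ M φ} (h : Typing Γ M φ) :
    ∀ Δ, (∀ (n : ℕ) χ, Γ[n]? = some χ → Sem χ Δ) → Sem φ Δ := by
  induction h with
  | var hg => exact fun Δ env => env _ _ hg
  | abort h ih =>
      exact fun Δ env => Sem.paste _ (fun _ p => p.elim) (ih Δ env) (fun Δ' _ p => p.elim)
  | lam h ih =>
      intro Δ env L' hi sa
      exact ih L' (env_ext hi env sa)
  | app h1 h2 ih1 ih2 => exact fun Δ env => ih1 Δ env Δ incl_refl (ih2 Δ env)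
  | pair h1 h2 ih1 ih2 => exact fun Δ env => ⟨ih1 Δ env, ih2 Δ env⟩
  | fst h ih => exact fun Δ env => (ih Δ env).1
  | snd h ih => exact fun Δ env => (ih Δ env).2
  | inl h ih => exact fun Δ env => .ret (Or.inl (ih Δ env))
  | inr h ih => exact fun Δ env => .ret (Or.inr (ih Δ env))
  | case h1 h2 h3 ih1 ih2 ih3 =>
      intro Δ env
      refine Sem.paste _ ?_ (ih1 Δ env) ?_
      · intro Δ₁ Δ₂ hi p
        exact p.elim (fun x => Or.inl (Sem.mono _ x hi)) (fun x => Or.inr (Sem.mono _ x hi))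
      · intro Δ' hi p
        exact p.elim (fun sa => ih2 Δ' (env_ext hi env sa)) (fun sb => ih3 Δ' (env_ext hi env sb))

lemma Typing.toAJ {L M φ} (h : Typing L M φ) : AJ true L φ :=
  (rr φ L).2 (h.sound L (fun n χ hg => (rr χ L).1 (.hyp (List.mem_of_getElem? hg))))

def eOK : Formula → Bool
  | .var _ => true
  | .bot => true
  | .disj _ _ => true
  | _ => false

lemma eOK_iff (ρ : Formula) : eOK ρ = true ↔ (ρ.isAtom ∨ ρ.isDisj) := by
  cases ρ <;> simp [eOK, Formula.isAtom, Formula.isDisj]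

noncomputable section Automaton

variable (Φ : Formula)

abbrev Sub := {φ : Formula // φ ∈ subf Φ}

abbrev QQ := Sub Φ ⊕ (Sub Φ × Sub Φ) ⊕ (Sub Φ × Sub Φ) ⊕ Unit

def stq (φ : Sub Φ) : QQ Φ := Sum.inl φ
def spq (ψ φ : Sub Φ) : QQ Φ := Sum.inr (Sum.inl (ψ, φ))
def adq (χ φ : Sub Φ) : QQ Φ := Sum.inr (Sum.inr (Sum.inl (χ, φ)))
def finq : QQ Φ := Sum.inr (Sum.inr (Sum.inr ()))

def allSub : List (Sub Φ) := (subf Φ).attach.toList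

lemma mem_allSub (x : Sub Φ) : x ∈ allSub Φ := by
  simp [allSub, Finset.mem_toList]

def entryI (φ : Sub Φ) : List (Instr (QQ Φ) (Sub Φ)) :=
  (allSub Φ).map (fun ψ => .test (stq Φ φ) {ψ} ∅ (spq Φ ψ φ))

def goalI : Sub Φ → List (Instr (QQ Φ) (Sub Φ))
  | ⟨.imp a b, h⟩ =>
      [.test (stq Φ ⟨.imp a b, h⟩) ∅ {⟨a, mem_imp_l h⟩} (stq Φ ⟨b, mem_imp_r h⟩)]
  | ⟨.conj a b, h⟩ =>
      [.branch (stq Φ ⟨.conj a b, h⟩) (stq Φ ⟨a, mem_conj_l h⟩) (stq Φ ⟨b, mem_conj_r h⟩)]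
  | ⟨.disj a b, h⟩ =>
      [.test (stq Φ ⟨.disj a b, h⟩) ∅ ∅ (stq Φ ⟨a, mem_disj_l h⟩),
       .test (stq Φ ⟨.disj a b, h⟩) ∅ ∅ (stq Φ ⟨b, mem_disj_r h⟩)]
  | _ => []

def spI : Sub Φ → Sub Φ → List (Instr (QQ Φ) (Sub Φ))
  | ⟨.var p, h⟩, φ =>
      if (⟨.var p, h⟩ : Sub Φ) = φ then [.test (spq Φ ⟨.var p, h⟩ φ) ∅ ∅ (finq Φ)] else []
  | ⟨.bot, h⟩, φ =>
      if eOK φ.val then [.test (spq Φ ⟨.bot, h⟩ φ) ∅ ∅ (finq Φ)] else []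
  | ⟨.imp a b, h⟩, φ =>
      [.branch (spq Φ ⟨.imp a b, h⟩ φ) (stq Φ ⟨a, mem_imp_l h⟩) (spq Φ ⟨b, mem_imp_r h⟩ φ)]
  | ⟨.conj a b, h⟩, φ =>
      [.test (spq Φ ⟨.conj a b, h⟩ φ) ∅ ∅ (spq Φ ⟨a, mem_conj_l h⟩ φ),
       .test (spq Φ ⟨.conj a b, h⟩ φ) ∅ ∅ (spq Φ ⟨b, mem_conj_r h⟩ φ)]
  | ⟨.disj a b, h⟩, φ =>
      if eOK φ.val then
        [.branch (spq Φ ⟨.disj a b, h⟩ φ) (adq Φ ⟨a, mem_disj_l h⟩ φ) (adq Φ ⟨b, mem_disj_r h⟩ φ)]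
      else []

def adI (χ φ : Sub Φ) : List (Instr (QQ Φ) (Sub Φ)) :=
  [.test (adq Φ χ φ) ∅ {χ} (stq Φ φ)]

def AUT : MonAut (QQ Φ) (Sub Φ) where
  final := finq Φ
  instrs :=
    (allSub Φ).flatMap (fun φ => goalI Φ φ ++ entryI Φ φ) ++
    (allSub Φ).flatMap (fun ψ => (allSub Φ).flatMap (fun φ => spI Φ ψ φ ++ adI Φ ψ φ))

lemma instr_mem₁ {φ : Sub Φ} {i} (h : i ∈ goalI Φ φ ++ entryI Φ φ) : i ∈ (AUT Φ).instrs :=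
  List.mem_append.mpr (Or.inl (List.mem_flatMap.mpr ⟨φ, mem_allSub Φ φ, h⟩))

lemma instr_mem₂ {ψ φ : Sub Φ} {i} (h : i ∈ spI Φ ψ φ ++ adI Φ ψ φ) : i ∈ (AUT Φ).instrs :=
  List.mem_append.mpr (Or.inr (List.mem_flatMap.mpr
    ⟨ψ, mem_allSub Φ ψ, List.mem_flatMap.mpr ⟨φ, mem_allSub Φ φ, h⟩⟩))

lemma entry_mem {ψ φ : Sub Φ} :
    Instr.test (stq Φ φ) {ψ} ∅ (spq Φ ψ φ) ∈ (AUT Φ).instrs :=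
  instr_mem₁ Φ (List.mem_append.mpr (Or.inr (List.mem_map.mpr ⟨ψ, mem_allSub Φ ψ, rfl⟩)))

end Automaton

section Soundness

variable (Φ : Formula)

def matchesL (L : List Formula) (Γ : Finset (Sub Φ)) : Prop :=
  ∀ γ : Formula, γ ∈ L ↔ ∃ h : γ ∈ subf Φ, (⟨γ, h⟩ : Sub Φ) ∈ Γ

noncomputable def listOf (Γ : Finset (Sub Φ)) : List Formula := Γ.toList.map Subtype.val

lemma matches_listOf (Γ : Finset (Sub Φ)) : matchesL Φ (listOf Φ Γ) Γ := by
  intro γ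
  simp only [listOf, List.mem_map, Finset.mem_toList]
  constructor
  · rintro ⟨x, hx, rfl⟩; exact ⟨x.2, hx⟩
  · rintro ⟨h, hm⟩; exact ⟨⟨γ, h⟩, hm, rfl⟩

lemma matches_cons {L : List Formula} {Γ : Finset (Sub Φ)} {χ : Sub Φ}
    (h : matchesL Φ L Γ) : matchesL Φ (χ.val :: L) (insert χ Γ) := by
  intro γ
  simp only [List.mem_cons, Finset.mem_insert]
  constructor
  · rintro (rfl | hγ)
    · exact ⟨χ.2, Or.inl rfl⟩
    · obtain ⟨hh, hm⟩ := (h γ).1 hγ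
      exact ⟨hh, Or.inr hm⟩
  · rintro ⟨hh, (he | hm)⟩
    · exact Or.inl (congrArg Subtype.val he)
    · exact Or.inr ((h γ).2 ⟨hh, hm⟩)

lemma matches_incl {L L' : List Formula} {Γ : Finset (Sub Φ)}
    (h : matchesL Φ L Γ) (h' : matchesL Φ L' Γ) : incl L L' :=
  fun γ hγ => (h' γ).2 ((h γ).1 hγ)

lemma matches_sub {L : List Formula} {Γ : Finset (Sub Φ)} (h : matchesL Φ L Γ) :
    ∀ γ ∈ L, γ ∈ subf Φ := by
  intro γ hγ
  obtain ⟨hh, _⟩ := (h γ).1 hγ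
  exact hh

lemma matches_mem {L : List Formula} {Γ : Finset (Sub Φ)} {ψ : Sub Φ}
    (h : matchesL Φ L Γ) (hm : ψ ∈ Γ) : ψ.val ∈ L :=
  (h ψ.val).2 ⟨ψ.2, hm⟩

def PP (ρ : Formula) (Γ : Finset (Sub Φ)) : Prop :=
  ∃ L, matchesL Φ L Γ ∧ AJ true L ρ

def Mng : QQ Φ → Finset (Sub Φ) → Prop
  | Sum.inl φ, Γ => PP Φ φ.val Γ
  | Sum.inr (Sum.inl (ψ, φ)), Γ => ∀ L, matchesL Φ L Γ → AJ false L ψ.val → AJ true L φ.val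
  | Sum.inr (Sum.inr (Sum.inl (χ, φ))), Γ => PP Φ φ.val (insert χ Γ)
  | Sum.inr (Sum.inr (Sum.inr _)), _ => True

def ISound (i : Instr (QQ Φ) (Sub Φ)) : Prop :=
  match i with
  | .test q S₁ S₂ p => ∀ Γ, S₁ ⊆ Γ → Mng Φ p (Γ ∪ S₂) → Mng Φ q Γ
  | .branch q p₁ p₂ => ∀ Γ, Mng Φ p₁ Γ → Mng Φ p₂ Γ → Mng Φ q Γ

lemma PP_transport {ρ : Formula} {Γ : Finset (Sub Φ)} {L : List Formula}
    (hL : matchesL Φ L Γ) (h : PP Φ ρ Γ) : AJ true L ρ := by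
  obtain ⟨L', hL', haj⟩ := h
  exact haj.mono (matches_incl Φ hL' hL)

lemma sound_goalI (φ : Sub Φ) : ∀ i ∈ goalI Φ φ, ISound Φ i := by
  obtain ⟨v, hv⟩ := φ
  cases v with
  | var p => simp [goalI]
  | bot => simp [goalI]
  | imp a b =>
      intro i hi
      simp only [goalI, List.mem_singleton] at hi
      subst hi
      intro Γ _ hp
      refine ⟨listOf Φ Γ, matches_listOf Φ Γ, ?_⟩
      rw [Finset.union_comm, ← Finset.insert_eq] at hp
      exact .lam (PP_transport Φ (matches_cons Φ (matches_listOf Φ Γ) (χ := ⟨a, mem_imp_l hv⟩)) hp)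
  | conj a b =>
      intro i hi
      simp only [goalI, List.mem_singleton] at hi
      subst hi
      intro Γ h1 h2
      refine ⟨listOf Φ Γ, matches_listOf Φ Γ, ?_⟩
      exact .pair (PP_transport Φ (matches_listOf Φ Γ) h1)
        (PP_transport Φ (matches_listOf Φ Γ) h2)
  | disj a b =>
      intro i hi
      simp only [goalI, List.mem_cons, List.not_mem_nil, or_false] at hi
      rcases hi with rfl | rfl <;> intro Γ _ hp <;>
        rw [Finset.union_empty] at hp <;> obtain ⟨L, hL, haj⟩ := hp
      · exact ⟨L, hL, .inl haj⟩
      · exact ⟨L, hL, .inr haj⟩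

lemma sound_entryI (φ : Sub Φ) : ∀ i ∈ entryI Φ φ, ISound Φ i := by
  intro i hi
  simp only [entryI, List.mem_map] at hi
  obtain ⟨ψ, _, rfl⟩ := hi
  intro Γ hs hp
  rw [Finset.union_empty] at hp
  have hψΓ : ψ ∈ Γ := Finset.singleton_subset_iff.mp hs
  refine ⟨listOf Φ Γ, matches_listOf Φ Γ, ?_⟩
  exact hp (listOf Φ Γ) (matches_listOf Φ Γ)
    (.hyp (matches_mem Φ (matches_listOf Φ Γ) hψΓ))

lemma sound_spI (ψ φ : Sub Φ) : ∀ i ∈ spI Φ ψ φ, ISound Φ i := by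
  obtain ⟨v, hv⟩ := ψ
  cases v with
  | var p =>
      intro i hi
      simp only [spI] at hi
      split at hi
      · next heq =>
          simp only [List.mem_singleton] at hi
          subst hi
          intro Γ _ _ L hL hne
          have : Formula.var p = φ.val := congrArg Subtype.val heq
          rw [← this]
          exact .ne hne trivial
      · simp at hi
  | bot =>
      intro i hi
      simp only [spI] at hi
      split at hi
      · next heq =>
          simp only [List.mem_singleton] at hi
          subst hi
          intro Γ _ _ L hL hne
          exact .abort hne ((eOK_iff φ.val).mp heq)
      · simp at hi
  | imp a b =>
      intro i hi
      simp only [spI, List.mem_singleton] at hi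
      subst hi
      intro Γ h1 h2 L hL hne
      exact h2 L hL (.app hne (PP_transport Φ hL h1))
  | conj a b =>
      intro i hi
      simp only [spI, List.mem_cons, List.not_mem_nil, or_false] at hi
      rcases hi with rfl | rfl <;> intro Γ _ hp <;> rw [Finset.union_empty] at hp <;>
        intro L hL hne
      · exact hp L hL (.fst hne)
      · exact hp L hL (.snd hne)
  | disj a b =>
      intro i hi
      simp only [spI] at hi
      split at hi
      · next heq =>
          simp only [List.mem_singleton] at hi
          subst hi
          intro Γ h1 h2 L hL hne
          refine .case hne ?_ ?_ ((eOK_iff φ.val).mp heq)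
          · exact PP_transport Φ (matches_cons Φ hL (χ := ⟨a, mem_disj_l hv⟩)) h1
          · exact PP_transport Φ (matches_cons Φ hL (χ := ⟨b, mem_disj_r hv⟩)) h2
      · simp at hi
  
lemma sound_adI (χ φ : Sub Φ) : ∀ i ∈ adI Φ χ φ, ISound Φ i := by
  intro i hi
  simp only [adI, List.mem_singleton] at hi
  subst hi
  intro Γ _ hp
  rw [Finset.union_comm, ← Finset.insert_eq] at hp
  exact hp

lemma sound_all : ∀ i ∈ (AUT Φ).instrs, ISound Φ i := by
  intro i hi
  rcases List.mem_append.mp hi with h | h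
  · obtain ⟨φ, _, hm⟩ := List.mem_flatMap.mp h
    rcases List.mem_append.mp hm with h' | h'
    · exact sound_goalI Φ φ i h'
    · exact sound_entryI Φ φ i h'
  · obtain ⟨ψ, _, hm⟩ := List.mem_flatMap.mp h
    obtain ⟨φ, _, hm2⟩ := List.mem_flatMap.mp hm
    rcases List.mem_append.mp hm2 with h' | h'
    · exact sound_spI Φ ψ φ i h'
    · exact sound_adI Φ ψ φ i h'

lemma accept_sound {q : QQ Φ} {Γ : Finset (Sub Φ)} (h : Accepting (AUT Φ) q Γ) :
    Mng Φ q Γ := by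
  induction h with
  | final => trivial
  | test hm hs _ ih => exact sound_all Φ _ hm _ hs ih
  | branch hm _ _ ih1 ih2 => exact sound_all Φ _ hm _ ih1 ih2

end Soundness

section Completeness

variable (Φ : Formula)

def CMot : Bool → List Formula → Formula → Prop
  | true, L, ρ => ∀ (h : ρ ∈ subf Φ) (Γ : Finset (Sub Φ)), matchesL Φ L Γ →
      Accepting (AUT Φ) (stq Φ ⟨ρ, h⟩) Γ
  | false, L, ρ => ∀ (Γ : Finset (Sub Φ)), matchesL Φ L Γ → ∀ (h : ρ ∈ subf Φ) (φg : Sub Φ),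
      Accepting (AUT Φ) (spq Φ ⟨ρ, h⟩ φg) Γ → Accepting (AUT Φ) (stq Φ φg) Γ

lemma aj_compl {b L ρ} (h : AJ b L ρ) : CMot Φ b L ρ := by
  induction h with
  | hyp hm =>
      intro Γ hma h φg hacc
      refine Accepting.test (entry_mem Φ (ψ := ⟨_, h⟩)) ?_ ?_
      · exact Finset.singleton_subset_iff.mpr ((hma _).1 hm).2
      · rwa [Finset.union_empty]
  | app h1 h2 ih1 ih2 =>
      rename_i L' a c
      intro Γ hma h φg hacc
      have himp := h1.memSub (Φ := Φ) (matches_sub Φ hma)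
      have hins : Instr.branch (spq Φ ⟨.imp a c, himp⟩ φg)
          (stq Φ ⟨a, mem_imp_l himp⟩) (spq Φ ⟨c, mem_imp_r himp⟩ φg) ∈ (AUT Φ).instrs :=
        instr_mem₂ Φ (ψ := ⟨.imp a c, himp⟩) (φ := φg) (List.mem_append.mpr (Or.inl (by simp [spI])))
      exact ih1 Γ hma himp φg (Accepting.branch hins (ih2 (mem_imp_l himp) Γ hma) hacc)
  | fst h1 ih1 =>
      rename_i L' a c
      intro Γ hma h φg hacc
      have hcj := h1.memSub (Φ := Φ) (matches_sub Φ hma)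
      have hins : Instr.test (spq Φ ⟨.conj a c, hcj⟩ φg) ∅ ∅
          (spq Φ ⟨a, mem_conj_l hcj⟩ φg) ∈ (AUT Φ).instrs :=
        instr_mem₂ Φ (ψ := ⟨.conj a c, hcj⟩) (φ := φg) (List.mem_append.mpr (Or.inl (by simp [spI])))
      refine ih1 Γ hma hcj φg (Accepting.test hins (Finset.empty_subset Γ) ?_)
      rwa [Finset.union_empty]
  | snd h1 ih1 =>
      rename_i L' a c
      intro Γ hma h φg hacc
      have hcj := h1.memSub (Φ := Φ) (matches_sub Φ hma)
      have hins : Instr.test (spq Φ ⟨.conj a c, hcj⟩ φg) ∅ ∅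
          (spq Φ ⟨c, mem_conj_r hcj⟩ φg) ∈ (AUT Φ).instrs :=
        instr_mem₂ Φ (ψ := ⟨.conj a c, hcj⟩) (φ := φg) (List.mem_append.mpr (Or.inl (by simp [spI])))
      refine ih1 Γ hma hcj φg (Accepting.test hins (Finset.empty_subset Γ) ?_)
      rwa [Finset.union_empty]
  | lam h1 ih1 =>
      rename_i L' a c
      intro h Γ hma
      have hins : Instr.test (stq Φ ⟨.imp a c, h⟩) ∅ {⟨a, mem_imp_l h⟩}
          (stq Φ ⟨c, mem_imp_r h⟩) ∈ (AUT Φ).instrs :=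
        instr_mem₁ Φ (φ := ⟨.imp a c, h⟩) (List.mem_append.mpr (Or.inl (by simp [goalI])))
      refine Accepting.test hins (Finset.empty_subset Γ) ?_
      rw [Finset.union_comm, ← Finset.insert_eq]
      exact ih1 (mem_imp_r h) _ (matches_cons Φ hma (χ := ⟨a, mem_imp_l h⟩))
  | pair h1 h2 ih1 ih2 =>
      rename_i L' a c
      intro h Γ hma
      have hins : Instr.branch (stq Φ ⟨.conj a c, h⟩) (stq Φ ⟨a, mem_conj_l h⟩)
          (stq Φ ⟨c, mem_conj_r h⟩) ∈ (AUT Φ).instrs :=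
        instr_mem₁ Φ (φ := ⟨.conj a c, h⟩) (List.mem_append.mpr (Or.inl (by simp [goalI])))
      exact Accepting.branch hins (ih1 (mem_conj_l h) Γ hma) (ih2 (mem_conj_r h) Γ hma)
  | inl h1 ih1 =>
      rename_i L' a c
      intro h Γ hma
      have hins : Instr.test (stq Φ ⟨.disj a c, h⟩) ∅ ∅
          (stq Φ ⟨a, mem_disj_l h⟩) ∈ (AUT Φ).instrs :=
        instr_mem₁ Φ (φ := ⟨.disj a c, h⟩) (List.mem_append.mpr (Or.inl (by simp [goalI])))
      refine Accepting.test hins (Finset.empty_subset Γ) ?_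
      rw [Finset.union_empty]
      exact ih1 (mem_disj_l h) Γ hma
  | inr h1 ih1 =>
      rename_i L' a c
      intro h Γ hma
      have hins : Instr.test (stq Φ ⟨.disj a c, h⟩) ∅ ∅
          (stq Φ ⟨c, mem_disj_r h⟩) ∈ (AUT Φ).instrs :=
        instr_mem₁ Φ (φ := ⟨.disj a c, h⟩) (List.mem_append.mpr (Or.inl (by simp [goalI])))
      refine Accepting.test hins (Finset.empty_subset Γ) ?_
      rw [Finset.union_empty]
      exact ih1 (mem_disj_r h) Γ hma
  | ne h1 ha ih1 =>
      rename_i L' ρ'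
      intro h Γ hma
      have hins : Instr.test (spq Φ ⟨ρ', h⟩ ⟨ρ', h⟩) ∅ ∅ (finq Φ) ∈ (AUT Φ).instrs := by
        refine instr_mem₂ Φ (ψ := ⟨ρ', h⟩) (φ := ⟨ρ', h⟩) (List.mem_append.mpr (Or.inl ?_))
        cases ρ' with
        | var p => simp [spI]
        | bot => simp [spI, eOK]
        | imp a c => exact absurd ha (by simp [Formula.isAtom])
        | conj a c => exact absurd ha (by simp [Formula.isAtom])
        | disj a c => exact absurd ha (by simp [Formula.isAtom])
      exact ih1 Γ hma h ⟨ρ', h⟩ (Accepting.test hins (Finset.empty_subset Γ) Accepting.final)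
  | case hd hl hr hc ihd ihl ihr =>
      rename_i L' a c ρ'
      intro h Γ hma
      have hdm := hd.memSub (Φ := Φ) (matches_sub Φ hma)
      have hins1 : Instr.test (adq Φ ⟨a, mem_disj_l hdm⟩ ⟨ρ', h⟩) ∅ {⟨a, mem_disj_l hdm⟩}
          (stq Φ ⟨ρ', h⟩) ∈ (AUT Φ).instrs :=
        instr_mem₂ Φ (ψ := ⟨a, mem_disj_l hdm⟩) (φ := ⟨ρ', h⟩) (List.mem_append.mpr (Or.inr (by simp [adI])))
      have hins2 : Instr.test (adq Φ ⟨c, mem_disj_r hdm⟩ ⟨ρ', h⟩) ∅ {⟨c, mem_disj_r hdm⟩}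
          (stq Φ ⟨ρ', h⟩) ∈ (AUT Φ).instrs :=
        instr_mem₂ Φ (ψ := ⟨c, mem_disj_r hdm⟩) (φ := ⟨ρ', h⟩) (List.mem_append.mpr (Or.inr (by simp [adI])))
      have hins3 : Instr.branch (spq Φ ⟨.disj a c, hdm⟩ ⟨ρ', h⟩)
          (adq Φ ⟨a, mem_disj_l hdm⟩ ⟨ρ', h⟩) (adq Φ ⟨c, mem_disj_r hdm⟩ ⟨ρ', h⟩)
          ∈ (AUT Φ).instrs := by
        refine instr_mem₂ Φ (ψ := ⟨.disj a c, hdm⟩) (φ := ⟨ρ', h⟩) (List.mem_append.mpr (Or.inl ?_))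
        simp only [spI]
        rw [if_pos ((eOK_iff ρ').mpr hc)]
        simp
      have acc1 : Accepting (AUT Φ) (adq Φ ⟨a, mem_disj_l hdm⟩ ⟨ρ', h⟩) Γ := by
        refine Accepting.test hins1 (Finset.empty_subset Γ) ?_
        rw [Finset.union_comm, ← Finset.insert_eq]
        exact ihl h _ (matches_cons Φ hma (χ := ⟨a, mem_disj_l hdm⟩))
      have acc2 : Accepting (AUT Φ) (adq Φ ⟨c, mem_disj_r hdm⟩ ⟨ρ', h⟩) Γ := by
        refine Accepting.test hins2 (Finset.empty_subset Γ) ?_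
        rw [Finset.union_comm, ← Finset.insert_eq]
        exact ihr h _ (matches_cons Φ hma (χ := ⟨c, mem_disj_r hdm⟩))
      exact ihd Γ hma hdm ⟨ρ', h⟩ (Accepting.branch hins3 acc1 acc2)
  | abort hd hc ihd =>
      rename_i L' ρ'
      intro h Γ hma
      have hbm := hd.memSub (Φ := Φ) (matches_sub Φ hma)
      have hins : Instr.test (spq Φ ⟨.bot, hbm⟩ ⟨ρ', h⟩) ∅ ∅ (finq Φ) ∈ (AUT Φ).instrs := by
        refine instr_mem₂ Φ (ψ := ⟨.bot, hbm⟩) (φ := ⟨ρ', h⟩) (List.mem_append.mpr (Or.inl ?_))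
        simp only [spI]
        rw [if_pos ((eOK_iff ρ').mpr hc)]
        simp
      exact ihd Γ hma hbm ⟨ρ', h⟩ (Accepting.test hins (Finset.empty_subset Γ) Accepting.final)

end Completeness

/-- for every formula `Φ` of full IPC there is a monotonic automaton
`M_Φ` — whose registers are the subformulas of `Φ` and whose states include the
subformulas of `Φ` (via the injection `st`) — such that a configuration `⟨φ, Γ⟩`
is accepting iff `Γ ⊢ M : φ` for some long normal form `M`; in particular `⊢ Φ`
iff the configuration `⟨Φ, ∅⟩` is accepting. -/
theorem automaton_for_provability (Φ : Formula) :
    ∃ (Q : Type) (_ : Fintype Q) (A : MonAut Q {φ : Formula // φ ∈ subf Φ})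
      (st : {φ : Formula // φ ∈ subf Φ} → Q),
      Function.Injective st ∧
      (∀ (φ : {φ : Formula // φ ∈ subf Φ}) (Γ : Finset {φ : Formula // φ ∈ subf Φ}),
        Accepting A (st φ) Γ ↔
          ∃ L : List Formula,
            (∀ γ : Formula, γ ∈ L ↔ ∃ h : γ ∈ subf Φ, (⟨γ, h⟩ : {φ : Formula // φ ∈ subf Φ}) ∈ Γ) ∧
            ∃ M : Tm, Typing L M φ.val ∧ Lnf M φ.val) ∧
      ((∃ M : Tm, Typing [] M Φ) ↔ Accepting A (st ⟨Φ, self_mem_subf Φ⟩) ∅) := by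
  refine ⟨QQ Φ, inferInstance, AUT Φ, stq Φ, ?_, ?_, ?_, ?_⟩
  · exact fun a b h => Sum.inl_injective h
  · intro φ Γ
    constructor
    · intro h
      obtain ⟨L, hm, haj⟩ := accept_sound Φ h
      obtain ⟨M, hT, hL⟩ := haj.toTerm
      exact ⟨L, hm, M, hT, hL⟩
    · rintro ⟨L, hm, M, hT, -⟩
      have := aj_compl Φ hT.toAJ φ.2 Γ hm
      exact this
  · rintro ⟨M, hT⟩
    refine aj_compl Φ hT.toAJ (self_mem_subf Φ) ∅ ?_
    intro γ
    simp [matchesL]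
  · intro h
    obtain ⟨L, hm, haj⟩ := accept_sound Φ h
    have hnil : L = [] := by
      refine List.eq_nil_iff_forall_not_mem.mpr fun γ hγ => ?_
      obtain ⟨h', hmem⟩ := (hm γ).1 hγ
      exact absurd hmem (Finset.notMem_empty _)
    subst hnil
    obtain ⟨M, hT, -⟩ := haj.toTerm
    exact ⟨M, hT⟩

end IPCStmt8
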